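/- arXiv:2008.11091 — 2 statements merged into one kernel-verified Lean document; each statement's English description precedes it below -/
import Mathlib

section
/- Let f : ℝ^m → ℝ be C¹, let α, β ∈ (0,1), δ₀ > 0, and let (x_n) be the backtracking gradient descent sequence from an arbitrary initial point x₀ ∈ ℝ^m. Then either lim_{n→∞} f(x_n) = −∞, or lim_{n→∞} ‖x_{n+1} − x_n‖ = 0. -/
/-! Each backtracking step satisfies Armijo's condition with a step size `δ ∈ (0, δ₀]`, so the
squared step length `δ²‖∇f‖²` is at most `δ₀ / α` times the decrease of `f`. Hence `f(xₙ)` is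
nonincreasing; if it does not tend to `−∞` it converges, its successive decreases tend to `0`,
and so do the step lengths. -/

open Gradient

/-- Armijo's condition at `x` for step size `δ`:
`f(x − δ∇f(x)) − f(x) ≤ −αδ‖∇f(x)‖²`. -/
def ArmijoCondition {E : Type*} [NormedAddCommGroup E] [InnerProductSpace ℝ E]
    [CompleteSpace E] (f : E → ℝ) (α δ : ℝ) (x : E) : Prop :=
  f (x - δ • ∇ f x) - f x ≤ -(α * δ * ‖∇ f x‖ ^ 2)

/-- `δsel` is the backtracking learning rate function: `δsel x` is the largest number of the
form `β^j δ₀` (i.e. the one with the smallest exponent `j`) satisfying Armijo's condition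
at `x`. -/
def IsBacktrackingRate {E : Type*} [NormedAddCommGroup E] [InnerProductSpace ℝ E]
    [CompleteSpace E] (f : E → ℝ) (α β δ₀ : ℝ) (δsel : E → ℝ) : Prop :=
  ∀ x : E, ∃ j : ℕ, δsel x = β ^ j * δ₀ ∧ ArmijoCondition f α (δsel x) x ∧
    ∀ i < j, ¬ ArmijoCondition f α (β ^ i * δ₀) x

open Filter Topology

theorem tendsto_atBot_or_tendsto_zero_of_sq_le_mul_sub_succ {a s : ℕ → ℝ} {C : ℝ} (hC : 0 < C)
    (h : ∀ n, s n ^ 2 ≤ C * (a n - a (n + 1))) (hs : ∀ n, 0 ≤ s n) :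
    Tendsto a atTop atBot ∨ Tendsto s atTop (𝓝 0) := by
  have hanti : Antitone a := antitone_nat_of_succ_le fun n =>
    sub_nonneg.mp (nonneg_of_mul_nonneg_right ((sq_nonneg (s n)).trans (h n)) hC)
  refine (tendsto_atTop_of_antitone hanti).imp_right fun ⟨l, hl⟩ => ?_
  have hdecr : Tendsto (fun n => C * (a n - a (n + 1))) atTop (𝓝 0) := by
    simpa using (hl.sub (hl.comp (tendsto_add_atTop_nat 1))).const_mul C
  have hsq : Tendsto (fun n => s n ^ 2) atTop (𝓝 0) :=
    squeeze_zero (fun n => sq_nonneg _) h hdecr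
  simpa [Real.sqrt_sq (hs _)] using hsq.sqrt

section Armijo

variable {E : Type*} [NormedAddCommGroup E] [InnerProductSpace ℝ E] [CompleteSpace E]
  {f : E → ℝ} {α β δ₀ δ : ℝ} {x : E}

theorem ArmijoCondition.sq_norm_smul_gradient_le (h : ArmijoCondition f α δ x) (hα : 0 < α)
    (hδ : 0 ≤ δ) (hδδ₀ : δ ≤ δ₀) :
    ‖δ • ∇ f x‖ ^ 2 ≤ δ₀ / α * (f x - f (x - δ • ∇ f x)) := by
  unfold ArmijoCondition at h
  have hg := sq_nonneg ‖∇ f x‖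
  calc ‖δ • ∇ f x‖ ^ 2 = δ * δ * ‖∇ f x‖ ^ 2 := by
        rw [norm_smul, Real.norm_of_nonneg hδ]; ring
    _ ≤ δ₀ * δ * ‖∇ f x‖ ^ 2 := by gcongr
    _ = δ₀ / α * (α * δ * ‖∇ f x‖ ^ 2) := by field_simp
    _ ≤ δ₀ / α * (f x - f (x - δ • ∇ f x)) :=
        mul_le_mul_of_nonneg_left (by linarith) (div_nonneg (hδ.trans hδδ₀) hα.le)

namespace IsBacktrackingRate

variable {δsel : E → ℝ}

theorem armijo (h : IsBacktrackingRate f α β δ₀ δsel) (x : E) :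
    ArmijoCondition f α (δsel x) x :=
  let ⟨_, _, hA, _⟩ := h x; hA

theorem pos (h : IsBacktrackingRate f α β δ₀ δsel) (hβ : 0 < β) (hδ₀ : 0 < δ₀) (x : E) :
    0 < δsel x := by
  obtain ⟨j, hj, -⟩ := h x
  rw [hj]
  positivity

theorem le_initial (h : IsBacktrackingRate f α β δ₀ δsel) (hβ0 : 0 ≤ β) (hβ1 : β ≤ 1)
    (hδ₀ : 0 ≤ δ₀) (x : E) : δsel x ≤ δ₀ := by
  obtain ⟨j, hj, -⟩ := h x
  rw [hj]
  exact mul_le_of_le_one_left hδ₀ (pow_le_one₀ hβ0 hβ1)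

end IsBacktrackingRate

end Armijo

theorem backtracking_GD_f_diverges_or_steps_vanish_general
    {m : ℕ} (f : EuclideanSpace ℝ (Fin m) → ℝ)
    (α β δ₀ : ℝ) (hα0 : 0 < α) (hβ0 : 0 < β) (hβ1 : β < 1) (hδ₀ : 0 < δ₀)
    (δsel : EuclideanSpace ℝ (Fin m) → ℝ) (hδsel : IsBacktrackingRate f α β δ₀ δsel)
    (x : ℕ → EuclideanSpace ℝ (Fin m))
    (hupd : ∀ n, x (n + 1) = x n - δsel (x n) • ∇ f (x n)) :
    Filter.Tendsto (fun n => f (x n)) Filter.atTop Filter.atBot ∨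
      Filter.Tendsto (fun n => ‖x (n + 1) - x n‖) Filter.atTop (nhds 0) := by
  refine tendsto_atBot_or_tendsto_zero_of_sq_le_mul_sub_succ (div_pos hδ₀ hα0)
    (fun n => ?_) (fun n => norm_nonneg _)
  have hstep := (hδsel.armijo (x n)).sq_norm_smul_gradient_le hα0 (hδsel.pos hβ0 hδ₀ (x n)).le
    (hδsel.le_initial hβ0.le hβ1.le hδ₀.le (x n))
  rwa [hupd n, sub_sub_cancel_left, norm_neg]

/-- Let `f : ℝ^m → ℝ` be `C¹`, `α, β ∈ (0,1)`, `δ₀ > 0`, and `(x n)` the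
backtracking gradient descent sequence from an arbitrary initial point. Then either
`f(x n) → −∞`, or `‖x_{n+1} − x_n‖ → 0`. -/
theorem backtracking_GD_f_diverges_or_steps_vanish
    {m : ℕ} (f : EuclideanSpace ℝ (Fin m) → ℝ) (hf : ContDiff ℝ 1 f)
    (α β δ₀ : ℝ) (hα0 : 0 < α) (hα1 : α < 1) (hβ0 : 0 < β) (hβ1 : β < 1) (hδ₀ : 0 < δ₀)
    (δsel : EuclideanSpace ℝ (Fin m) → ℝ) (hδsel : IsBacktrackingRate f α β δ₀ δsel)
    (x : ℕ → EuclideanSpace ℝ (Fin m))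
    (hupd : ∀ n, x (n + 1) = x n - δsel (x n) • ∇ f (x n)) :
    Filter.Tendsto (fun n => f (x n)) Filter.atTop Filter.atBot ∨
      Filter.Tendsto (fun n => ‖x (n + 1) - x n‖) Filter.atTop (nhds 0) :=
  backtracking_GD_f_diverges_or_steps_vanish_general f α β δ₀ hα0 hβ0 hβ1 hδ₀ δsel hδsel x hupd
end

section
/- Let f : ℝ^m → ℝ be C¹, let α, β ∈ (0,1), δ₀ > 0, and let (x_n) be the backtracking gradient descent sequence from an arbitrary initial point x₀ ∈ ℝ^m. Let A = {x ∈ ℝ^m : ∇f(x) = 0}, let C be the set of cluster points of (x_n), and let B be a compact connected component of A with C ∩ B ≠ ∅. Then C ⊆ B and C is connected; in particular, if B is a single point {p}, then the whole sequence (x_n) converges to p. -/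
/-!
Armijo's condition makes `f (x n)` drop by at least `α δ(x n) ‖∇f(x n)‖²` at each step. Since
`f (x n)` is bounded below by its value at a cluster point, these drops, and with them the
steps `‖x (n+1) - x n‖`, tend to zero; and every cluster point is critical, because near a
non-critical point the backtracking step is bounded below.

As a compact component of the closed set `A`, `B` has a compact neighbourhood `V` in `A` that
is at positive distance `r` from the rest of `A`. The annulus between `V` and distance `r` holds
no critical point, hence no cluster point, so the short steps can no longer cross it once the
sequence comes near `B`: it is trapped near `V`. A sequence with vanishing steps in a compact set
has a connected cluster set, which then lies in the component `B` of `A`; if `B = {p}`, `p` is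
the only cluster point in a compact set holding the tail of the sequence.
-/

open Gradient

open Filter Metric Set Topology InnerProductSpace

theorem Antitone.tendsto_of_mapClusterPt {ι α : Type*} [Preorder ι] [LinearOrder α]
    [TopologicalSpace α] [OrderTopology α] {u : ι → α} (hu : Antitone u) {c : α}
    (hc : MapClusterPt c atTop u) : Tendsto u atTop (𝓝 c) := by
  have hlow : ∀ i, c ≤ u i := fun i => isClosed_Iic.closure_subset
    (hc.mem_closure_of_mem _ ((eventually_ge_atTop i).mono fun _ hj => hu hj))
  refine tendsto_order.2 ⟨fun a ha => .of_forall fun i => ha.trans_le (hlow i), fun a ha => ?_⟩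
  obtain ⟨i, hi⟩ := (hc.frequently (Iio_mem_nhds ha)).exists
  exact (eventually_ge_atTop i).mono fun _ hj => (hu hj).trans_lt hi

section Topology

variable {X : Type*}

theorem IsOpen.exists_isClopen_of_connectedComponent_subset [TopologicalSpace X] [T2Space X]
    [CompactSpace X] {x : X} {U : Set X} (hU : IsOpen U) (h : connectedComponent x ⊆ U) :
    ∃ V : Set X, IsClopen V ∧ x ∈ V ∧ V ⊆ U := by
  rw [connectedComponent_eq_iInter_isClopen] at h
  have H := hU.isClosed_compl.isCompact.inter_iInter_nonempty
    (fun s : { s : Set X // IsClopen s ∧ x ∈ s } => s.1) (fun s => s.2.1.1)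
  rw [← not_disjoint_iff_nonempty_inter, imp_not_comm, not_forall] at H
  obtain ⟨t, ht⟩ := H (disjoint_compl_left_iff_subset.2 h)
  refine ⟨⋂ s ∈ t, (s : Set X), isClopen_biInter_finset (fun s _ => s.2.1),
    mem_iInter₂.2 fun s _ => s.2.2, ?_⟩
  rwa [← disjoint_compl_left_iff_subset, disjoint_iff_inter_eq_empty,
    ← not_nonempty_iff_eq_empty]

theorem IsCompact.eventually_notMem_of_forall_not_mapClusterPt [TopologicalSpace X] {ι : Type*}
    {l : Filter ι} {x : ι → X} {K : Set X} (hK : IsCompact K)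
    (h : ∀ p ∈ K, ¬MapClusterPt p l x) : ∀ᶠ n in l, x n ∉ K := by
  by_contra hfreq
  obtain ⟨p, hpK, hp⟩ :=
    hK.exists_mapClusterPt_of_frequently ((not_eventually.1 hfreq).mono fun _ => not_not.1)
  exact h p hpK hp

theorem le_dist_of_mem_thickening_of_notMem_cthickening [PseudoMetricSpace X] {s : Set X}
    {ε δ : ℝ} {a b : X} (ha : a ∈ thickening ε s) (hb : b ∉ cthickening δ s) :
    δ - ε ≤ dist a b := by
  obtain ⟨c, hc, hac⟩ := mem_thickening_iff.1 ha
  by_contra! h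
  exact hb (mem_cthickening_of_dist_le b c δ s hc
    (by linarith [dist_triangle b a c, dist_comm a b]))

theorem eventually_mem_of_frequently_mem_of_dist_lt [PseudoMetricSpace X] {x : ℕ → X}
    {U W : Set X} {e : ℝ}
    (hstep : ∀ᶠ n in atTop, dist (x (n + 1)) (x n) < e)
    (hsep : ∀ a ∈ U, ∀ b ∈ W, e ≤ dist a b)
    (hUW : ∀ᶠ n in atTop, x n ∈ U ∪ W) (hU : ∃ᶠ n in atTop, x n ∈ U) :
    ∀ᶠ n in atTop, x n ∈ U := by
  obtain ⟨N, hN⟩ := eventually_atTop.1 (hstep.and hUW)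
  obtain ⟨n₀, hn₀, hxn₀⟩ := frequently_atTop.1 hU N
  refine eventually_atTop.2 ⟨n₀, fun n hn => ?_⟩
  induction n, hn using Nat.le_induction with
  | base => exact hxn₀
  | succ n hn ih =>
    refine (hN (n + 1) (by omega)).2.resolve_right fun hW => ?_
    exact (hsep _ ih _ hW).not_gt (dist_comm (x n) _ ▸ (hN n (by omega)).1)

variable [MetricSpace X]

theorem isPreconnected_setOf_mapClusterPt {x : ℕ → X} {K : Set X} (hK : IsCompact K)
    (hxK : ∀ᶠ n in atTop, x n ∈ K)
    (hstep : Tendsto (fun n => dist (x (n + 1)) (x n)) atTop (𝓝 0)) :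
    IsPreconnected {p | MapClusterPt p atTop x} := by
  set C := {p | MapClusterPt p atTop x}
  have hC : IsClosed C := isClosed_setOfPred_clusterPt
  rw [isPreconnected_iff_subset_of_fully_disjoint_closed hC]
  intro u v hu hv hCuv huv
  have hCu : IsCompact (C ∩ u) := hK.of_isClosed_subset (hC.inter hu)
    fun p hp => hK.isClosed.closure_subset (hp.1.mem_closure_of_mem _ hxK)
  obtain ⟨δ, hδ, hdisj⟩ := (huv.mono inter_subset_right inter_subset_right :
    Disjoint (C ∩ u) (C ∩ v)).exists_cthickenings hCu (hC.inter hv)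
  rcases (C ∩ u).eq_empty_or_nonempty with hCu_empty | ⟨p, hpC, hpu⟩
  · exact Or.inr fun z hz => (hCuv hz).resolve_left fun hzu => hCu_empty.subset ⟨hz, hzu⟩
  have hnear : ∀ᶠ n in atTop, x n ∈ thickening (δ / 2) (C ∩ u) := by
    refine eventually_mem_of_frequently_mem_of_dist_lt (W := thickening (δ / 2) (C ∩ v))
      (hstep.eventually (gt_mem_nhds (half_pos hδ))) (fun a ha b hb => ?_) ?_
      (hpC.frequently (isOpen_thickening.mem_nhds (self_subset_thickening (half_pos hδ) _
        ⟨hpC, hpu⟩)))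
    · have hb' : b ∉ cthickening δ (C ∩ u) := fun hb' => disjoint_left.1 hdisj hb'
        (cthickening_mono (half_le_self hδ.le) _ (thickening_subset_cthickening _ _ hb))
      linarith [le_dist_of_mem_thickening_of_notMem_cthickening ha hb']
    · refine hK.tendsto_nhdsSet_of_mapClusterPt hxK (fun p _ hp => hp) ?_
      refine (isOpen_thickening.union isOpen_thickening).mem_nhdsSet.2 fun z hz => ?_
      rcases hCuv hz with hzu | hzv
      exacts [Or.inl (self_subset_thickening (half_pos hδ) _ ⟨hz, hzu⟩),
        Or.inr (self_subset_thickening (half_pos hδ) _ ⟨hz, hzv⟩)]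
  refine Or.inl fun z hz => (hCuv hz).resolve_right fun hzv => disjoint_left.1 hdisj ?_
    (self_subset_cthickening _ ⟨hz, hzv⟩)
  exact cthickening_mono (half_le_self hδ.le) _
    (closure_thickening_subset_cthickening _ _ (hz.mem_closure_of_mem _ hnear))

variable [ProperSpace X]

theorem exists_isCompact_isolated_superset_connectedComponentIn {A : Set X} (hA : IsClosed A)
    {q : X} (hq : q ∈ A) (hB : IsCompact (connectedComponentIn A q)) :
    ∃ V, IsCompact V ∧ connectedComponentIn A q ⊆ V ∧ ∃ r > 0, A ∩ cthickening r V ⊆ V := by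
  set B := connectedComponentIn A q
  set S := A ∩ cthickening 1 B
  have hqS : q ∈ S := mem_inter hq (self_subset_cthickening _ (mem_connectedComponentIn hq))
  have hBS : B = connectedComponentIn S q :=
    (isPreconnected_connectedComponentIn.subset_connectedComponentIn (mem_connectedComponentIn hq)
      fun y hy => mem_inter (connectedComponentIn_subset _ _ hy)
        (self_subset_cthickening _ hy)).antisymm (connectedComponentIn_mono _ inter_subset_left)
  rw [connectedComponentIn_eq_image hqS] at hBS
  -- in the compact space `S` the component of `q` is the intersection of its clopen
  -- neighbourhoods, so one of them lies within `1 / 2` of `B`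
  have : CompactSpace S := isCompact_iff_compactSpace.mp (hB.cthickening.inter_left hA)
  obtain ⟨V, hV, hqV, hVB⟩ := (isOpen_thickening.preimage continuous_subtype_val :
    IsOpen ((↑) ⁻¹' thickening (1 / 2) B : Set S)).exists_isClopen_of_connectedComponent_subset
    fun z hz => self_subset_thickening (by norm_num) B (hBS ▸ ⟨z, hz, rfl⟩)
  have hVc : IsCompact ((↑) '' V : Set X) := hV.isClosed.isCompact.image continuous_subtype_val
  obtain ⟨δ, hδ, hdisj⟩ := (disjoint_image_of_injective Subtype.val_injective
    (disjoint_compl_right (a := V))).exists_cthickenings hVc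
    (hV.compl.isClosed.isCompact.image continuous_subtype_val).isClosed
  refine ⟨_, hVc, hBS ▸ image_mono (hV.connectedComponent_subset hqV), min δ (1 / 2),
    by positivity, ?_⟩
  rintro y ⟨hyA, hy⟩
  have hyS : y ∈ S := by
    have h := cthickening_thickening_subset (by norm_num) (1 / 2) B
      (cthickening_subset_of_subset _ (image_subset_iff.2 hVB)
        (cthickening_mono (min_le_right δ (1 / 2)) _ hy))
    exact mem_inter hyA (by rwa [add_halves] at h)
  by_contra hyV
  exact disjoint_left.1 hdisj (cthickening_mono (min_le_left _ _) _ hy)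
    (self_subset_cthickening _ ⟨⟨y, hyS⟩, fun h => hyV ⟨_, h, rfl⟩, rfl⟩)

theorem eventually_mem_cthickening_of_inter_cthickening_subset {x : ℕ → X}
    (hstep : Tendsto (fun n => dist (x (n + 1)) (x n)) atTop (𝓝 0)) {A V : Set X}
    (hV : IsCompact V) {r : ℝ} (hr : 0 < r) (hAV : A ∩ cthickening r V ⊆ V)
    (hxA : ∀ p, MapClusterPt p atTop x → p ∈ A) {q : X} (hqV : q ∈ V)
    (hq : MapClusterPt q atTop x) : ∀ᶠ n in atTop, x n ∈ cthickening r V := by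
  have hband : ∀ᶠ n in atTop, x n ∉ cthickening (r / 2) V \ thickening (r / 4) V :=
    (hV.cthickening.diff isOpen_thickening).eventually_notMem_of_forall_not_mapClusterPt
      fun p hp hpx => hp.2 (self_subset_thickening (by positivity) _
        (hAV ⟨hxA p hpx, cthickening_mono (by linarith) _ hp.1⟩))
  have hnear : ∀ᶠ n in atTop, x n ∈ thickening (r / 4) V := by
    refine eventually_mem_of_frequently_mem_of_dist_lt (W := (cthickening (r / 2) V)ᶜ)
      (hstep.eventually (gt_mem_nhds (by positivity : 0 < r / 4))) (fun a ha b hb => ?_)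
      (hband.mono fun n hn => ?_)
      (hq.frequently (isOpen_thickening.mem_nhds (self_subset_thickening (by positivity) _ hqV)))
    · linarith [le_dist_of_mem_thickening_of_notMem_cthickening ha hb]
    · by_cases h : x n ∈ thickening (r / 4) V
      exacts [Or.inl h, Or.inr fun h' => hn ⟨h', h⟩]
  exact hnear.mono fun n hn =>
    thickening_subset_cthickening _ _ (thickening_mono (by linarith) _ hn)

end Topology

section Backtracking

variable {E : Type*} [NormedAddCommGroup E] [InnerProductSpace ℝ E] [CompleteSpace E]
  {f : E → ℝ}

theorem ContDiff.continuous_gradient (hf : ContDiff ℝ 1 f) : Continuous (∇ f) :=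
  (toDual ℝ E).symm.continuous.comp (hf.continuous_fderiv one_ne_zero)

theorem armijoCondition_of_norm_gradient_sub_le (hf : Differentiable ℝ f) {α δ : ℝ} {x : E}
    (hδ : 0 ≤ δ)
    (h : ∀ y ∈ segment ℝ x (x - δ • ∇ f x), ‖∇ f y - ∇ f x‖ ≤ (1 - α) * ‖∇ f x‖) :
    ArmijoCondition f α δ x := by
  set g := ∇ f x
  set L := toDual ℝ E g
  -- mean value inequality for `f` minus its linearization at `x`
  have hmvt : ‖(f (x - δ • g) - L (x - δ • g)) - (f x - L x)‖ ≤
      (1 - α) * ‖g‖ * ‖(x - δ • g) - x‖ :=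
    (convex_segment _ _).norm_image_sub_le_of_norm_hasFDerivWithin_le
      (f := fun y => f y - L y) (f' := fun y => fderiv ℝ f y - L)
      (fun y _ => ((hf y).hasFDerivAt.sub L.hasFDerivAt).hasFDerivWithinAt)
      (fun y hy => by
        rw [← toDual_gradient, ← map_sub, LinearIsometryEquiv.norm_map]; exact h y hy)
      (left_mem_segment ℝ _ _) (right_mem_segment ℝ _ _)
  have hL : L (x - δ • g) - L x = -(δ * ‖g‖ ^ 2) := by
    rw [← map_sub, sub_sub_cancel_left, toDual_apply_apply, inner_neg_right, inner_smul_right,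
      real_inner_self_eq_norm_sq]
  have hstep : ‖(x - δ • g) - x‖ = δ * ‖g‖ := by
    rw [sub_sub_cancel_left, norm_neg, norm_smul, Real.norm_of_nonneg hδ]
  rw [hstep, Real.norm_eq_abs] at hmvt
  unfold ArmijoCondition
  nlinarith [le_abs_self ((f (x - δ • g) - L (x - δ • g)) - (f x - L x))]

theorem exists_forall_mem_ball_armijoCondition (hf : ContDiff ℝ 1 f) {α : ℝ} (hα : α < 1)
    {p : E} (hp : ∇ f p ≠ 0) : ∃ ρ > 0, ∃ δ' > 0, ∀ y ∈ ball p ρ,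
      ‖∇ f p‖ / 2 ≤ ‖∇ f y‖ ∧ ∀ δ ∈ Icc 0 δ', ArmijoCondition f α δ y := by
  set η := ‖∇ f p‖
  have hη : 0 < η := norm_pos_iff.2 hp
  set ε := min (η / 2) ((1 - α) * η / 4)
  have hε : 0 < ε := lt_min (by positivity) (div_pos (mul_pos (sub_pos.2 hα) hη) four_pos)
  have hεη : ε ≤ η / 2 := min_le_left _ _
  have hεα : ε ≤ (1 - α) * η / 4 := min_le_right _ _
  obtain ⟨ρ, hρ, hball⟩ := Metric.continuous_iff.1 hf.continuous_gradient p ε hε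
  refine ⟨ρ / 2, half_pos hρ, ρ / (4 * η), by positivity, fun y hy => ?_⟩
  have hyρ : y ∈ ball p ρ := ball_subset_ball (half_le_self hρ.le) hy
  have hgy : ‖∇ f y - ∇ f p‖ < ε := by rw [← dist_eq_norm]; exact hball y hyρ
  have hlow : η / 2 ≤ ‖∇ f y‖ := by
    linarith [norm_sub_norm_le (∇ f p) (∇ f y), norm_sub_rev (∇ f p) (∇ f y)]
  have hup : ‖∇ f y‖ ≤ 2 * η := by linarith [norm_sub_norm_le (∇ f y) (∇ f p)]
  refine ⟨hlow, fun δ hδ => armijoCondition_of_norm_gradient_sub_le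
    (hf.differentiable one_ne_zero) hδ.1 fun z hz => ?_⟩
  have hend : y - δ • ∇ f y ∈ ball p ρ := by
    have hδη : δ * ‖∇ f y‖ ≤ ρ / 2 := calc
      δ * ‖∇ f y‖ ≤ ρ / (4 * η) * (2 * η) := mul_le_mul hδ.2 hup (norm_nonneg _) (by positivity)
      _ = ρ / 2 := by field_simp; ring
    rw [mem_ball, dist_eq_norm, sub_right_comm]
    calc ‖y - p - δ • ∇ f y‖ ≤ ‖y - p‖ + δ * ‖∇ f y‖ := by
          rw [← norm_smul_of_nonneg hδ.1]; exact norm_sub_le _ _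
      _ < ρ := by rw [← dist_eq_norm]; linarith [mem_ball.1 hy]
  have hgz : ‖∇ f z - ∇ f p‖ < ε := by
    rw [← dist_eq_norm]; exact hball z ((convex_ball p ρ).segment_subset hyρ hend hz)
  calc ‖∇ f z - ∇ f y‖ ≤ ‖∇ f z - ∇ f p‖ + ‖∇ f p - ∇ f y‖ :=
        norm_sub_le_norm_sub_add_norm_sub _ _ _
    _ ≤ (1 - α) * (η / 2) := by linarith [norm_sub_rev (∇ f p) (∇ f y)]
    _ ≤ (1 - α) * ‖∇ f y‖ := mul_le_mul_of_nonneg_left hlow (by linarith)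

namespace IsBacktrackingRate

variable {α β δ₀ : ℝ} {δsel : E → ℝ}

theorem armijoCondition (h : IsBacktrackingRate f α β δ₀ δsel) (y : E) :
    ArmijoCondition f α (δsel y) y :=
  (h y).choose_spec.2.1

theorem apply_nonneg (h : IsBacktrackingRate f α β δ₀ δsel) (hβ : 0 ≤ β) (hδ₀ : 0 ≤ δ₀) (y : E) :
    0 ≤ δsel y := by
  obtain ⟨j, hj, -⟩ := h y
  rw [hj]
  positivity

theorem apply_le (h : IsBacktrackingRate f α β δ₀ δsel) (hβ0 : 0 ≤ β) (hβ1 : β ≤ 1) (hδ₀ : 0 ≤ δ₀)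
    (y : E) : δsel y ≤ δ₀ := by
  obtain ⟨j, hj, -⟩ := h y
  rw [hj]
  exact mul_le_of_le_one_left hδ₀ (pow_le_one₀ hβ0 hβ1)

theorem min_le_apply (h : IsBacktrackingRate f α β δ₀ δsel) (hβ : 0 ≤ β) (hδ₀ : 0 ≤ δ₀) {δ' : ℝ}
    {y : E} (harm : ∀ δ ∈ Icc 0 δ', ArmijoCondition f α δ y) : min δ₀ (β * δ') ≤ δsel y := by
  obtain ⟨j, hj, -, hfirst⟩ := h y
  rw [hj]
  cases j with
  | zero => simp
  | succ i =>
    have hi : δ' < β ^ i * δ₀ := by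
      by_contra! hle
      exact hfirst i i.lt_succ_self (harm _ ⟨by positivity, hle⟩)
    calc min δ₀ (β * δ') ≤ β * δ' := min_le_right _ _
      _ ≤ β * (β ^ i * δ₀) := mul_le_mul_of_nonneg_left hi.le hβ
      _ = β ^ (i + 1) * δ₀ := by ring

variable {x : ℕ → E}

theorem sufficient_decrease (h : IsBacktrackingRate f α β δ₀ δsel)
    (hx : ∀ n, x (n + 1) = x n - δsel (x n) • ∇ f (x n)) (n : ℕ) :
    α * δsel (x n) * ‖∇ f (x n)‖ ^ 2 ≤ f (x n) - f (x (n + 1)) := by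
  have := h.armijoCondition (x n)
  rw [ArmijoCondition, ← hx n] at this
  linarith

theorem tendsto_mul_norm_gradient_sq (h : IsBacktrackingRate f α β δ₀ δsel)
    (hx : ∀ n, x (n + 1) = x n - δsel (x n) • ∇ f (x n)) (hα : 0 < α) (hβ : 0 ≤ β)
    (hδ₀ : 0 ≤ δ₀) (hf : Continuous f) {q : E} (hq : MapClusterPt q atTop x) :
    Tendsto (fun n => δsel (x n) * ‖∇ f (x n)‖ ^ 2) atTop (𝓝 0) := by
  have hnonneg n : 0 ≤ δsel (x n) * ‖∇ f (x n)‖ ^ 2 :=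
    mul_nonneg (h.apply_nonneg hβ hδ₀ _) (sq_nonneg _)
  have hanti : Antitone (f ∘ x) := antitone_nat_of_succ_le fun n => by
    simp only [Function.comp_apply]
    linarith [h.sufficient_decrease hx n, mul_nonneg hα.le (hnonneg n)]
  have hconv := hanti.tendsto_of_mapClusterPt (hq.continuousAt_comp hf.continuousAt)
  have hgap : Tendsto (fun n => (f (x n) - f (x (n + 1))) / α) atTop (𝓝 0) := by
    simpa using (hconv.sub (hconv.comp (tendsto_add_atTop_nat 1))).div_const α
  refine squeeze_zero hnonneg (fun n => ?_) hgap
  rw [le_div_iff₀ hα]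
  linarith [h.sufficient_decrease hx n]

theorem tendsto_dist_succ (h : IsBacktrackingRate f α β δ₀ δsel)
    (hx : ∀ n, x (n + 1) = x n - δsel (x n) • ∇ f (x n)) (hβ0 : 0 ≤ β) (hβ1 : β ≤ 1)
    (hδ₀ : 0 ≤ δ₀) (hdec : Tendsto (fun n => δsel (x n) * ‖∇ f (x n)‖ ^ 2) atTop (𝓝 0)) :
    Tendsto (fun n => dist (x (n + 1)) (x n)) atTop (𝓝 0) := by
  have hlim : Tendsto (fun n => √(δ₀ * (δsel (x n) * ‖∇ f (x n)‖ ^ 2))) atTop (𝓝 0) := by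
    simpa using (hdec.const_mul δ₀).sqrt
  refine squeeze_zero (fun _ => dist_nonneg) (fun n => ?_) hlim
  have hδn := h.apply_nonneg hβ0 hδ₀ (x n)
  rw [hx n, dist_eq_norm, sub_sub_cancel_left, norm_neg, norm_smul, Real.norm_of_nonneg hδn]
  refine Real.le_sqrt_of_sq_le ?_
  have := mul_le_mul_of_nonneg_right (h.apply_le hβ0 hβ1 hδ₀ (x n))
    (mul_nonneg hδn (sq_nonneg ‖∇ f (x n)‖))
  nlinarith

theorem gradient_eq_zero_of_mapClusterPt (h : IsBacktrackingRate f α β δ₀ δsel)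
    (hf : ContDiff ℝ 1 f) (hα : α < 1) (hβ : 0 < β) (hδ₀ : 0 < δ₀)
    (hdec : Tendsto (fun n => δsel (x n) * ‖∇ f (x n)‖ ^ 2) atTop (𝓝 0)) {p : E}
    (hp : MapClusterPt p atTop x) : ∇ f p = 0 := by
  by_contra hp0
  -- near `p` both the backtracking step and `‖∇ f‖` are bounded away from zero
  obtain ⟨ρ, hρ, δ', hδ', hball⟩ := exists_forall_mem_ball_armijoCondition hf hα hp0
  have hc : 0 < min δ₀ (β * δ') * (‖∇ f p‖ / 2) ^ 2 := by
    have := norm_pos_iff.2 hp0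
    positivity
  obtain ⟨n, hn, hsmall⟩ := ((hp.frequently (ball_mem_nhds p hρ)).and_eventually
    (hdec.eventually (gt_mem_nhds hc))).exists
  obtain ⟨hgrad, harm⟩ := hball (x n) hn
  refine hsmall.not_ge (mul_le_mul (h.min_le_apply hβ.le hδ₀.le harm)
    (pow_le_pow_left₀ (by positivity) hgrad 2) (by positivity) (h.apply_nonneg hβ.le hδ₀.le _))

end IsBacktrackingRate

end Backtracking

theorem backtracking_GD_cluster_set_in_compact_component_general
    {m : ℕ} (f : EuclideanSpace ℝ (Fin m) → ℝ) (hf : ContDiff ℝ 1 f)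
    (α β δ₀ : ℝ) (hα0 : 0 < α) (hα1 : α < 1) (hβ0 : 0 < β) (hβ1 : β < 1) (hδ₀ : 0 < δ₀)
    (δsel : EuclideanSpace ℝ (Fin m) → ℝ) (hδsel : IsBacktrackingRate f α β δ₀ δsel)
    (x : ℕ → EuclideanSpace ℝ (Fin m))
    (hupd : ∀ n, x (n + 1) = x n - δsel (x n) • ∇ f (x n))
    (A : Set (EuclideanSpace ℝ (Fin m))) (hA : A = {y | ∇ f y = 0})
    (C : Set (EuclideanSpace ℝ (Fin m)))
    (hC : C = {p | MapClusterPt p Filter.atTop x})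
    (B : Set (EuclideanSpace ℝ (Fin m))) (b : EuclideanSpace ℝ (Fin m))
    (hB : B = connectedComponentIn A b) (hBcompact : IsCompact B)
    (hCB : (C ∩ B).Nonempty) :
    C ⊆ B ∧ IsConnected C ∧
      (∀ p, B = {p} → Filter.Tendsto x Filter.atTop (nhds p)) := by
  subst hA hC
  obtain ⟨q, hqC, hqB⟩ := hCB
  have hdec := hδsel.tendsto_mul_norm_gradient_sq hupd hα0 hβ0.le hδ₀.le hf.continuous hqC
  have hcrit p (hp : MapClusterPt p atTop x) : p ∈ {y | ∇ f y = 0} :=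
    hδsel.gradient_eq_zero_of_mapClusterPt hf hα1 hβ0 hδ₀ hdec hp
  have hstep := hδsel.tendsto_dist_succ hupd hβ0.le hβ1.le hδ₀.le hdec
  rw [hB, connectedComponentIn_eq (hB ▸ hqB)] at hBcompact ⊢
  obtain ⟨V, hV, hBV, r, hr, hAV⟩ := exists_isCompact_isolated_superset_connectedComponentIn
    (isClosed_eq hf.continuous_gradient continuous_const) (hcrit q hqC) hBcompact
  have htrap := eventually_mem_cthickening_of_inter_cthickening_subset hstep hV hr hAV hcrit
    (hBV (mem_connectedComponentIn (hcrit q hqC))) hqC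
  have hpre := isPreconnected_setOf_mapClusterPt hV.cthickening htrap hstep
  have hCB : {p | MapClusterPt p atTop x} ⊆ connectedComponentIn {y | ∇ f y = 0} q :=
    hpre.subset_connectedComponentIn hqC hcrit
  refine ⟨hCB, ⟨⟨q, hqC⟩, hpre⟩, fun p hp => ?_⟩
  exact hV.cthickening.tendsto_nhds_of_unique_mapClusterPt htrap
    fun y _ hy => mem_singleton_iff.1 (hp ▸ hCB hy)

/-- Let `f : ℝ^m → ℝ` be `C¹`, `α, β ∈ (0,1)`, `δ₀ > 0`, and `(x n)` the
backtracking gradient descent sequence from an arbitrary initial point. Let `A` be the set of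
critical points of `f`, `C` the set of cluster points of `(x n)`, and `B` a compact connected
component of `A` with `C ∩ B ≠ ∅`. Then `C ⊆ B` and `C` is connected; in particular if
`B = {p}` then the whole sequence converges to `p`. -/
theorem backtracking_GD_cluster_set_in_compact_component
    {m : ℕ} (f : EuclideanSpace ℝ (Fin m) → ℝ) (hf : ContDiff ℝ 1 f)
    (α β δ₀ : ℝ) (hα0 : 0 < α) (hα1 : α < 1) (hβ0 : 0 < β) (hβ1 : β < 1) (hδ₀ : 0 < δ₀)
    (δsel : EuclideanSpace ℝ (Fin m) → ℝ) (hδsel : IsBacktrackingRate f α β δ₀ δsel)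
    (x : ℕ → EuclideanSpace ℝ (Fin m))
    (hupd : ∀ n, x (n + 1) = x n - δsel (x n) • ∇ f (x n))
    (A : Set (EuclideanSpace ℝ (Fin m))) (hA : A = {y | ∇ f y = 0})
    (C : Set (EuclideanSpace ℝ (Fin m)))
    (hC : C = {p | MapClusterPt p Filter.atTop x})
    (B : Set (EuclideanSpace ℝ (Fin m))) (b : EuclideanSpace ℝ (Fin m)) (hb : b ∈ A)
    (hB : B = connectedComponentIn A b) (hBcompact : IsCompact B)
    (hCB : (C ∩ B).Nonempty) :
    C ⊆ B ∧ IsConnected C ∧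
      (∀ p, B = {p} → Filter.Tendsto x Filter.atTop (nhds p)) :=
  backtracking_GD_cluster_set_in_compact_component_general f hf α β δ₀ hα0 hα1 hβ0 hβ1 hδ₀ δsel
    hδsel x hupd A hA C hC B b hB hBcompact hCB
end
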